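/- arXiv:2303.06001 — 3 statements merged into one kernel-verified Lean document; each statement's English description precedes it below -/
import Mathlib

section
/- The polynomial f = x_3x_1 + x_4x_2 + x_4x_1 + x_5x_2 is irreducible in the free algebra F⟨x_1,...,x_5⟩, but its image under the substitution x_i ↦ xy^i factors nontrivially in F⟨x,y⟩ as (xy^2 + xy^3)(yxy + y^2xy^2). -/
noncomputable section

/-- The degree of a noncommutative polynomial in the free algebra
`F⟨X⟩ = MonoidAlgebra F (FreeMonoid X)`. -/
def ncDeg {F : Type*} [Field F] {X : Type*} (f : MonoidAlgebra F (FreeMonoid X)) : ℕ :=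
  f.coeff.support.sup fun m => m.length

/-- The algebra homomorphism `F⟨X⟩ → F⟨x,y⟩` determined by its values `v i`
on the variables, extended multiplicatively to monomials and linearly. -/
def phiGen {F : Type*} [Field F] {X : Type*}
    (v : X → MonoidAlgebra F (FreeMonoid Bool)) :
    MonoidAlgebra F (FreeMonoid X) →ₐ[F] MonoidAlgebra F (FreeMonoid Bool) :=
  MonoidAlgebra.lift F _ (FreeMonoid X) (FreeMonoid.lift v)

/-- the word `x y^k` over `{x,y}`, with `x = true`, `y = false`. -/
def wxy (k : ℕ) : FreeMonoid Bool :=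
  FreeMonoid.of true * (FreeMonoid.of false) ^ k

/-!
A factorization `f = g * h` with `deg g, deg h > 0` of a polynomial of degree at most two forces
`deg g = deg h = 1`, because top-degree terms multiply without cancellation in a free monoid.
Then the coefficient of `x_a x_b` in `f` is `g_a h_b`, so the coefficient matrix of the quadratic
part of `f` has rank at most one; for `x₃x₁ + x₄x₂ + x₄x₁ + x₅x₂` its minor on rows `x₃, x₅` and
columns `x₁, x₂` equals `1`. The factorization of the image is a direct expansion.
-/

open FreeMonoid

theorem FreeMonoid.eq_and_eq_of_mul_eq_mul_of_length_le {α : Type*} {w u w' u' : FreeMonoid α}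
    (h : w' * u' = w * u) (hw : w'.length ≤ w.length) (hu : u'.length ≤ u.length) :
    w' = w ∧ u' = u := by
  have hlen : w'.length + u'.length = w.length + u.length := by
    rw [← length_mul, ← length_mul, h]
  obtain ⟨h₁, h₂⟩ := List.append_inj (congrArg toList h) (show w'.length = w.length by omega)
  exact ⟨toList.injective h₁, toList.injective h₂⟩

theorem FreeMonoid.of_mul_of_inj {α : Type*} {a b c d : α} :
    of a * of b = of c * of d ↔ a = c ∧ b = d := by
  rw [← toList.injective.eq_iff]
  simp [toList_mul, toList_of]

section ncDeg

variable {F : Type*} [Field F] {X : Type*}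

theorem ncDeg_le_iff {p : MonoidAlgebra F (FreeMonoid X)} {n : ℕ} :
    ncDeg p ≤ n ↔ ∀ m ∈ p.coeff.support, m.length ≤ n :=
  Finset.sup_le_iff

theorem length_le_ncDeg {p : MonoidAlgebra F (FreeMonoid X)} {m : FreeMonoid X}
    (hm : p.coeff m ≠ 0) : m.length ≤ ncDeg p :=
  Finset.le_sup (f := fun m : FreeMonoid X => m.length) (Finsupp.mem_support_iff.2 hm)

theorem ncDeg_of (m : FreeMonoid X) :
    ncDeg (MonoidAlgebra.of F (FreeMonoid X) m) = m.length := by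
  simp [ncDeg, MonoidAlgebra.of_apply, MonoidAlgebra.coeff_single]

theorem length_le_ncDeg_of_add_of {a b : FreeMonoid X} (hab : a.length < b.length) :
    b.length ≤
      ncDeg (MonoidAlgebra.of F (FreeMonoid X) a + MonoidAlgebra.of F (FreeMonoid X) b) := by
  have hne : a ≠ b := fun h => hab.ne (congrArg length h)
  refine length_le_ncDeg ?_
  simp [MonoidAlgebra.of_apply, MonoidAlgebra.coeff_single, hne]

theorem ncDeg_add_le (p q : MonoidAlgebra F (FreeMonoid X)) :
    ncDeg (p + q) ≤ max (ncDeg p) (ncDeg q) := by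
  classical
  rw [ncDeg, ncDeg, ncDeg, MonoidAlgebra.coeff_add, ← Finset.sup_union]
  exact Finset.sup_mono Finsupp.support_add

theorem ne_zero_of_ncDeg_pos {p : MonoidAlgebra F (FreeMonoid X)} (hp : 0 < ncDeg p) : p ≠ 0 := by
  rintro rfl
  simp [ncDeg] at hp

theorem coeff_mul_mul_of_ncDeg_le {g h : MonoidAlgebra F (FreeMonoid X)} {w u : FreeMonoid X}
    (hg : ncDeg g ≤ w.length) (hh : ncDeg h ≤ u.length) :
    (g * h).coeff (w * u) = g.coeff w * h.coeff u :=
  MonoidAlgebra.coeff_mul_mul_of_uniqueMul fun _ _ ha hb hab =>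
    eq_and_eq_of_mul_eq_mul_of_length_le hab (ncDeg_le_iff.1 hg _ ha) (ncDeg_le_iff.1 hh _ hb)

theorem ncDeg_add_ncDeg_le_ncDeg_mul {g h : MonoidAlgebra F (FreeMonoid X)}
    (hg : g ≠ 0) (hh : h ≠ 0) : ncDeg g + ncDeg h ≤ ncDeg (g * h) := by
  obtain ⟨w, hw, hgw⟩ : ∃ w ∈ g.coeff.support, ncDeg g = w.length :=
    Finset.exists_mem_eq_sup _ (Finsupp.support_nonempty_iff.2 (by simpa using hg)) _
  obtain ⟨u, hu, hhu⟩ : ∃ u ∈ h.coeff.support, ncDeg h = u.length :=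
    Finset.exists_mem_eq_sup _ (Finsupp.support_nonempty_iff.2 (by simpa using hh)) _
  have hcoeff : (g * h).coeff (w * u) ≠ 0 := by
    rw [coeff_mul_mul_of_ncDeg_le hgw.le hhu.le]
    exact mul_ne_zero (Finsupp.mem_support_iff.1 hw) (Finsupp.mem_support_iff.1 hu)
  simpa [hgw, hhu] using length_le_ncDeg hcoeff

theorem not_exists_factorization_of_ncDeg_le_two {f : MonoidAlgebra F (FreeMonoid X)}
    (hf : ncDeg f ≤ 2) {i j k l : X}
    (hminor : f.coeff (of i * of k) * f.coeff (of j * of l) ≠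
      f.coeff (of i * of l) * f.coeff (of j * of k)) :
    ¬ ∃ g h : MonoidAlgebra F (FreeMonoid X), 0 < ncDeg g ∧ 0 < ncDeg h ∧ f = g * h := by
  rintro ⟨g, h, hg, hh, rfl⟩
  have hdeg := ncDeg_add_ncDeg_le_ncDeg_mul (ne_zero_of_ncDeg_pos hg) (ne_zero_of_ncDeg_pos hh)
  have hcoeff (a b : X) : (g * h).coeff (of a * of b) = g.coeff (of a) * h.coeff (of b) :=
    coeff_mul_mul_of_ncDeg_le (by simp; omega) (by simp; omega)
  apply hminor
  simp only [hcoeff]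
  ring

end ncDeg

theorem phiGen_of {F : Type*} [Field F] {X : Type*} (v : X → MonoidAlgebra F (FreeMonoid Bool))
    (i : X) : phiGen v (MonoidAlgebra.of F (FreeMonoid X) (of i)) = v i := by
  rw [phiGen, MonoidAlgebra.lift_of, lift_eval_of]

/-- The polynomial `f = x₃x₁ + x₄x₂ + x₄x₁ + x₅x₂` is irreducible in
`F⟨x₁,…,x₅⟩` (variables indexed by `Fin 5`, with `x_i` the `(i-1)`-st index),
but its image under the substitution `x_i ↦ x y^i` factors nontrivially in
`F⟨x,y⟩` as `(xy² + xy³)(yxy + y²xy²)`. -/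
theorem irreducible_but_image_factors (F : Type*) [Field F] :
    letI of5 := MonoidAlgebra.of F (FreeMonoid (Fin 5))
    letI x : Fin 5 → MonoidAlgebra F (FreeMonoid (Fin 5)) := fun i => of5 (FreeMonoid.of i)
    letI f : MonoidAlgebra F (FreeMonoid (Fin 5)) := x 2 * x 0 + x 3 * x 1 + x 3 * x 0 + x 4 * x 1
    letI φ := phiGen (F := F) (fun i : Fin 5 =>
      MonoidAlgebra.of F (FreeMonoid Bool) (wxy ((i : ℕ) + 1)))
    letI of2 := MonoidAlgebra.of F (FreeMonoid Bool)
    letI g : MonoidAlgebra F (FreeMonoid Bool) := of2 (wxy 2) + of2 (wxy 3)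
    letI h : MonoidAlgebra F (FreeMonoid Bool) :=
      of2 (FreeMonoid.of false * wxy 1) + of2 ((FreeMonoid.of false) ^ 2 * wxy 2)
    (¬ ∃ g' h' : MonoidAlgebra F (FreeMonoid (Fin 5)),
        0 < ncDeg g' ∧ 0 < ncDeg h' ∧ f = g' * h') ∧
    φ f = g * h ∧ 0 < ncDeg g ∧ 0 < ncDeg h := by
  simp only [← map_mul]
  refine ⟨not_exists_factorization_of_ncDeg_le_two (i := 2) (j := 4) (k := 0) (l := 1) ?_ ?_,
    ?_, ?_, ?_⟩
  · repeat refine (ncDeg_add_le _ _).trans (max_le ?_ ?_)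
    all_goals exact (ncDeg_of _).le
  · simp [MonoidAlgebra.of_apply, MonoidAlgebra.coeff_single, of_mul_of_inj, of_injective.eq_iff]
  · simp only [map_add, map_mul, phiGen_of]
    rw [add_mul, mul_add, mul_add, ← add_assoc]
    simp only [← map_mul]
    -- the words agree termwise once `wxy` is unfolded, e.g. `xy³ · xy = xy² · (y · xy)`
    rfl
  · have hlt : (wxy 2).length < (wxy 3).length := by decide
    exact (pos_of_gt hlt).trans_le (length_le_ncDeg_of_add_of hlt)
  · have hlt : (of false * wxy 1).length < (of false ^ 2 * wxy 2).length := by decide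
    exact (pos_of_gt hlt).trans_le (length_le_ncDeg_of_add_of hlt)
end
end

section
/- Let u_1, u_2, ... be an enumeration of the nonempty minimally balanced words over {x,y} and let ū_i denote the letter-swap of u_i. The map φ sending x_i to u_i + ū_i, extended multiplicatively to monomials and linearly, is an injective ring homomorphism from the free algebra F⟨x_1, x_2, ...⟩ into F⟨x,y⟩. -/
/-! The minimally balanced words form a prefix code (none is a proper prefix of another) and
all of them begin with `x`, while their letter-swaps begin with `y`. Expanding
`φ (x_{i₁} ⋯ x_{iₖ}) = ∏ (u_{iⱼ} + ū_{iⱼ})` into words, the word `u_{i₁} ⋯ u_{iₖ}` therefore arises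
only from the choice without swaps, and by unique decoding only from this one monomial. So the
coefficient of `u_{i₁} ⋯ u_{iₖ}` in `φ f` is the coefficient of `x_{i₁} ⋯ x_{iₖ}` in `f`. -/

/-- The imbalance of a word over `{x,y}` (with `x = true`, `y = false`):
number of `x`'s minus number of `y`'s. -/
def imbL (m : List Bool) : ℤ := (m.count true : ℤ) - (m.count false : ℤ)

/-- A nonempty word over `{x,y}` is minimally balanced if its imbalance is `0`
and every nonempty proper prefix has strictly positive imbalance. -/
def MinBal (m : List Bool) : Prop :=
  m ≠ [] ∧ imbL m = 0 ∧ ∀ p : List Bool, p <+: m → p ≠ [] → p ≠ m → 0 < imbL p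
noncomputable section

namespace MinBal

variable {m : List Bool}

theorem head?_eq (h : MinBal m) : m.head? = some true := by
  obtain ⟨hne, hzero, hpos⟩ := h
  match m, hne with
  | [c], _ => cases c <;> simp [imbL] at hzero
  | c :: d :: s, _ =>
    have : 0 < imbL [c] := hpos [c] ⟨d :: s, rfl⟩ (by simp) (by simp)
    cases c <;> simp_all [imbL]

theorem eq_of_prefix {n : List Bool} (hm : MinBal m) (hn : MinBal n) (h : m <+: n) : m = n := by
  by_contra hne
  simpa [hm.2.1] using hn.2.2 m h hm.1 hne

end MinBal

section PrefixCode

open MonoidAlgebra FreeMonoid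

variable {ι α R : Type*} {w : ι → List α}

theorem eq_of_append_eq_append_of_prefix_code (hcode : ∀ i j, w i <+: w j → i = j) {i j : ι}
    {s s' : List α} (h : w i ++ s = w j ++ s') : i = j := by
  rcases List.prefix_or_prefix_of_prefix ⟨s, h⟩ (List.prefix_append (w j) s') with hij | hji
  · exact hcode i j hij
  · exact (hcode j i hji).symm

section Semiring

variable [Semiring R]

theorem coeff_single_mul_ofList_flatten_of_head?_ne {a b : α} (hab : a ≠ b)
    (hw : ∀ i, (w i).head? = some a) {w' : List α} (hw' : w'.head? = some b) (r : R)
    (x : R[FreeMonoid α]) (m : List ι) :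
    (single (ofList w') r * x).coeff (ofList (m.map w).flatten) = 0 := by
  refine coeff_single_mul_of_forall_mul_ne _ _ fun d hd => ?_
  have h : w' ++ d.toList = (m.map w).flatten := congrArg toList hd
  cases m with
  | nil => simp_all
  | cons j m =>
    have := congrArg List.head? h
    rw [List.map_cons, List.flatten_cons, List.head?_append, List.head?_append, hw', hw] at this
    exact hab (Option.some_injective _ this).symm

theorem coeff_prod_single_add_single [DecidableEq ι] (hcode : ∀ i j, w i <+: w j → i = j)
    {a b : α} (hab : a ≠ b)
    (hw : ∀ i, (w i).head? = some a) {w' : ι → List α} (hw' : ∀ i, (w' i).head? = some b)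
    (t m : List ι) :
    ((t.map fun i => single (ofList (w i)) (1 : R) + single (ofList (w' i)) 1).prod).coeff
      (ofList (m.map w).flatten) = if t = m then 1 else 0 := by
  induction t generalizing m with
  | nil =>
    cases m with
    | nil => simp [one_def]
    | cons j m =>
      rw [List.map_nil, List.prod_nil, one_def, coeff_single, Finsupp.single_eq_of_ne,
        if_neg (List.cons_ne_nil j m).symm]
      intro h
      simpa [hw j] using congrArg (List.head? ∘ toList) h
  | cons i t ih =>
    simp only [List.map_cons, List.prod_cons, add_mul, coeff_add, Finsupp.add_apply,
      coeff_single_mul_ofList_flatten_of_head?_ne hab hw (hw' i), add_zero]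
    cases m with
    | nil =>
      refine coeff_single_mul_of_forall_mul_ne _ _ fun d hd => ?_
      simpa [hw i] using congrArg (List.head? ∘ toList) hd
    | cons j m =>
      by_cases hij : i = j
      · subst hij
        rw [List.map_cons, List.flatten_cons, ofList_append, coeff_single_mul_mul, one_mul, ih]
        simp
      · rw [if_neg (by simp [hij])]
        refine coeff_single_mul_of_forall_mul_ne _ _ fun d hd => hij ?_
        exact eq_of_append_eq_append_of_prefix_code hcode (congrArg toList hd)

end Semiring

theorem coeff_lift_ofList_flatten [CommSemiring R]
    (hcode : ∀ i j, w i <+: w j → i = j) {a b : α} (hab : a ≠ b)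
    (hw : ∀ i, (w i).head? = some a) {w' : ι → List α} (hw' : ∀ i, (w' i).head? = some b)
    (f : R[FreeMonoid ι]) (m : List ι) :
    (MonoidAlgebra.lift R R[FreeMonoid α] (FreeMonoid ι)
        (FreeMonoid.lift fun i => single (ofList (w i)) 1 + single (ofList (w' i)) 1) f).coeff
      (ofList (m.map w).flatten) = f.coeff (ofList m) := by
  induction f using induction_linear with
  | zero => simp
  | add f g hf hg => simp only [map_add, coeff_add, Finsupp.add_apply, hf, hg]
  | single n r =>
    classical
    rw [lift_single, coeff_smul, Finsupp.smul_apply, FreeMonoid.lift_apply,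
      coeff_prod_single_add_single hcode hab hw hw', coeff_single, Finsupp.single_apply]
    simp only [← toList.injective.eq_iff, toList_ofList]
    split_ifs <;> simp

end PrefixCode

theorem bergman_embedding_injective_general (F : Type*) [Field F] (u : ℕ → List Bool)
    (hinj : Function.Injective u) (hmb : ∀ i, MinBal (u i)) :
    Function.Injective (phiGen (F := F) (fun i : ℕ =>
      MonoidAlgebra.of F (FreeMonoid Bool) (FreeMonoid.ofList (u i)) +
      MonoidAlgebra.of F (FreeMonoid Bool) (FreeMonoid.ofList ((u i).map not)))) := by
  have hcode : ∀ i j, u i <+: u j → i = j := fun i j h => hinj ((hmb i).eq_of_prefix (hmb j) h)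
  have hswap : ∀ i, ((u i).map not).head? = some false := fun i => by
    simp [List.head?_map, (hmb i).head?_eq]
  simp only [phiGen, MonoidAlgebra.of_apply]
  intro f g hfg
  ext n
  have hcoeff := fun f => coeff_lift_ofList_flatten (R := F) hcode (by decide)
    (fun i => (hmb i).head?_eq) hswap f n.toList
  rw [← FreeMonoid.ofList_toList n, ← hcoeff f, ← hcoeff g, hfg]

/-- Bergman's embedding: if `u 0, u 1, …` is an enumeration (without repetition)
of all nonempty minimally balanced words over `{x,y}`, then the map
`φ : x_i ↦ u_i + ū_i` (where `ū_i` is the letter-swap of `u_i`), extended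
multiplicatively to monomials and linearly, is an injective ring homomorphism
from the free algebra on countably many variables `F⟨x₁,x₂,…⟩` into `F⟨x,y⟩`. -/
theorem bergman_embedding_injective (F : Type*) [Field F] (u : ℕ → List Bool)
    (hinj : Function.Injective u) (hmb : ∀ i, MinBal (u i))
    (hall : ∀ m : List Bool, MinBal m → ∃ i, u i = m) :
    Function.Injective (phiGen (F := F) (fun i : ℕ =>
      MonoidAlgebra.of F (FreeMonoid Bool) (FreeMonoid.ofList (u i)) +
      MonoidAlgebra.of F (FreeMonoid Bool) (FreeMonoid.ofList ((u i).map not)))) :=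
  bergman_embedding_injective_general F u hinj hmb
end
end

section
/- Let B be the subalgebra of F⟨x,y⟩ spanned by balanced monomials (imbalance 0). If f ∈ B is nonzero and f = g·h is a factorization in F⟨x,y⟩ with g, h nonzero, then there exists an integer a such that every monomial in the support of g has imbalance a and every monomial in the support of h has imbalance −a. -/
noncomputable section

/-! Grade `F⟨x,y⟩` by imbalance. Because `F⟨x,y⟩` is a domain, the product of the top-weight
components of `g` and `h` is nonzero, and it agrees with `g * h` in weight `max g + max h`; so
`g * h` has a monomial of that weight, and dually one of weight `min g + min h`. As `g * h` is
balanced, `max g + max h = 0 = min g + min h`, which forces `min = max` on both factors. -/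

open MonoidAlgebra

section WeightComponent

variable {R M Γ : Type*} [Semiring R] {D : M → Γ}

open Classical in
def weightComponent (D : M → Γ) (γ : Γ) (g : MonoidAlgebra R M) : MonoidAlgebra R M :=
  ofCoeff (g.coeff.filter fun m => D m = γ)

theorem mem_support_weightComponent {γ : Γ} {g : MonoidAlgebra R M} {m : M} :
    m ∈ (weightComponent D γ g).coeff.support ↔ m ∈ g.coeff.support ∧ D m = γ := by
  simp only [weightComponent, coeff_ofCoeff, Finsupp.support_filter, Finset.mem_filter]

theorem weightComponent_ne_zero {g : MonoidAlgebra R M} {m : M}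
    (hm : m ∈ g.coeff.support) : weightComponent D (D m) g ≠ 0 := fun h0 => by
  simpa [h0] using mem_support_weightComponent (D := D) |>.2 ⟨hm, rfl⟩

variable [Monoid M] [AddCommMonoid Γ] [LinearOrder Γ] [IsOrderedCancelAddMonoid Γ]

theorem coeff_mul_weightComponent (hD : ∀ m n, D (m * n) = D m + D n)
    {g h : MonoidAlgebra R M} {A B : Γ}
    (hA : ∀ m ∈ g.coeff.support, D m ≤ A) (hB : ∀ n ∈ h.coeff.support, D n ≤ B)
    {w : M} (hw : D w = A + B) :
    (weightComponent D A g * weightComponent D B h).coeff w = (g * h).coeff w := by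
  classical
  have weights_eq :
      ∀ m ∈ g.coeff.support, ∀ n ∈ h.coeff.support, m * n = w → D m = A ∧ D n = B :=
    fun m hm n hn hmn =>
      (add_eq_add_iff_eq_and_eq (hA m hm) (hB n hn)).1 (by rw [← hD, hmn, hw])
  simp only [coeff_mul, Finsupp.sum, weightComponent, Finsupp.support_filter,
    Finset.sum_filter, Finsupp.filter_apply]
  refine Finset.sum_congr rfl fun m hm => ?_
  split_ifs with hmA
  · refine Finset.sum_congr rfl fun n hn => ?_
    by_cases hmn : m * n = w
    · rw [if_pos (weights_eq m hm n hn hmn).2]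
    · simp only [hmn, if_false, ite_self]
  · exact (Finset.sum_eq_zero fun n hn =>
      if_neg fun hmn => hmA (weights_eq m hm n hn hmn).1).symm

theorem exists_mem_support_mul_weight_eq [NoZeroDivisors (MonoidAlgebra R M)]
    (hD : ∀ m n, D (m * n) = D m + D n) {g h : MonoidAlgebra R M} {m₀ n₀ : M}
    (hm₀ : m₀ ∈ g.coeff.support) (hg : ∀ m ∈ g.coeff.support, D m ≤ D m₀)
    (hn₀ : n₀ ∈ h.coeff.support) (hh : ∀ n ∈ h.coeff.support, D n ≤ D n₀) :
    ∃ w ∈ (g * h).coeff.support, D w = D m₀ + D n₀ := by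
  classical
  have hne : weightComponent D (D m₀) g * weightComponent D (D n₀) h ≠ 0 :=
    mul_ne_zero (weightComponent_ne_zero hm₀) (weightComponent_ne_zero hn₀)
  obtain ⟨w, hw⟩ := Finsupp.support_nonempty_iff.2 (coeff_eq_zero.not.2 hne)
  obtain ⟨m, hm, n, hn, rfl⟩ := Finset.mem_mul.1 (support_coeff_mul_subset _ _ hw)
  have hwD : D (m * n) = D m₀ + D n₀ := by
    rw [hD, (mem_support_weightComponent.1 hm).2, (mem_support_weightComponent.1 hn).2]
  refine ⟨m * n, ?_, hwD⟩
  rwa [Finsupp.mem_support_iff, ← coeff_mul_weightComponent hD hg hh hwD,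
    ← Finsupp.mem_support_iff]

end WeightComponent

theorem imbL_append (l₁ l₂ : List Bool) : imbL (l₁ ++ l₂) = imbL l₁ + imbL l₂ := by
  simp only [imbL, List.count_append]
  push_cast
  ring

theorem factor_imbalance_constant_general (F : Type*) [Field F]
    (f g h : MonoidAlgebra F (FreeMonoid Bool))
    (hfB : ∀ m ∈ f.coeff.support, imbL (FreeMonoid.toList m) = 0)
    (hg : g ≠ 0) (hh : h ≠ 0) (hfgh : f = g * h) :
    ∃ a : ℤ, (∀ m ∈ g.coeff.support, imbL (FreeMonoid.toList m) = a) ∧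
      (∀ m ∈ h.coeff.support, imbL (FreeMonoid.toList m) = -a) := by
  set D : FreeMonoid Bool → ℤ := fun m => imbL m.toList
  have hD : ∀ m n, D (m * n) = D m + D n := fun m n => imbL_append m.toList n.toList
  have hfD : ∀ w ∈ (g * h).coeff.support, D w = 0 := hfgh ▸ hfB
  have hgs := Finsupp.support_nonempty_iff.2 (coeff_eq_zero.not.2 hg)
  have hhs := Finsupp.support_nonempty_iff.2 (coeff_eq_zero.not.2 hh)
  obtain ⟨m₁, hm₁, hg_le⟩ := g.coeff.support.exists_max_image D hgs
  obtain ⟨m₂, hm₂, hg_ge⟩ := g.coeff.support.exists_min_image D hgs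
  obtain ⟨n₁, hn₁, hh_le⟩ := h.coeff.support.exists_max_image D hhs
  obtain ⟨n₂, hn₂, hh_ge⟩ := h.coeff.support.exists_min_image D hhs
  have htop : D m₁ + D n₁ = 0 := by
    obtain ⟨w, hw, hwD⟩ := exists_mem_support_mul_weight_eq hD hm₁ hg_le hn₁ hh_le
    rw [← hwD, hfD w hw]
  -- minimal weights are the maximal ones for the reversed order on `ℤ`
  have hbot : D m₂ + D n₂ = 0 := by
    obtain ⟨w, hw, hwD⟩ :=
      exists_mem_support_mul_weight_eq (D := OrderDual.toDual ∘ D) hD hm₂ hg_ge hn₂ hh_ge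
    exact hwD.symm.trans (hfD w hw)
  refine ⟨D m₁, fun m hm => ?_, fun n hn => ?_⟩
  · linarith [hg_le m hm, hg_ge m hm, hh_ge n₁ hn₁]
  · linarith [hh_le n hn, hh_ge n hn, hg_ge m₁ hm₁]

/-- Let `B` be the subalgebra of `F⟨x,y⟩` spanned by balanced monomials
(imbalance `0`), membership in which is expressed by every monomial of the
support being balanced. If `f ∈ B` is nonzero and `f = g·h` with `g, h` nonzero,
then there is an integer `a` such that every monomial of `g` has imbalance `a`
and every monomial of `h` has imbalance `-a`. -/
theorem factor_imbalance_constant (F : Type*) [Field F]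
    (f g h : MonoidAlgebra F (FreeMonoid Bool))
    (hfB : ∀ m ∈ f.coeff.support, imbL (FreeMonoid.toList m) = 0)
    (hf : f ≠ 0) (hg : g ≠ 0) (hh : h ≠ 0) (hfgh : f = g * h) :
    ∃ a : ℤ, (∀ m ∈ g.coeff.support, imbL (FreeMonoid.toList m) = a) ∧
      (∀ m ∈ h.coeff.support, imbL (FreeMonoid.toList m) = -a) :=
  factor_imbalance_constant_general F f g h hfB hg hh hfgh
end
end
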